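/- Let p be a prime and G a finite subgroup of GL_2(F_p) acting irreducibly on V = F_p^2 (the standard representation). If p divides the order of G, then G contains SL_2(F_p). -/

import Mathlib

/-!
An element `u ∈ G` of order `p` is unipotent: `(u - 1) ^ p = u ^ p - 1 = 0` in characteristic
`p`, so `(u - 1) ^ 2 = 0` and `u` fixes a nonzero vector `v`. By irreducibility some `g ∈ G`
moves the line through `v`, and in the basis `(v, g v)` the elements `u` and `g u g⁻¹` become an
upper and a lower elementary transvection. Over the prime field `𝔽_p` their powers are all
elementary transvections, and these generate `SL₂(𝔽_p)`.
-/

open Matrix MatrixGroups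

theorem Subgroup.exists_mem_pow_eq_one_ne_one {G : Type*} [Group G] {H : Subgroup G} [Finite H]
    (p : ℕ) [Fact p.Prime] (hdvd : p ∣ Nat.card H) : ∃ u ∈ H, u ^ p = 1 ∧ u ≠ 1 := by
  obtain ⟨⟨u, huH⟩, hu⟩ := exists_prime_orderOf_dvd_card' (G := H) p hdvd
  rw [Subgroup.orderOf_mk] at hu
  refine ⟨u, huH, orderOf_dvd_iff_pow_eq_one.mp hu.dvd, ?_⟩
  rw [Ne, ← orderOf_eq_one_iff, hu]
  exact (Fact.out : p.Prime).ne_one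

namespace Matrix

section Unipotent

variable {n R : Type*} [Fintype n] [DecidableEq n] [CommRing R] [IsDomain R]

theorem pow_card_eq_zero_of_isNilpotent {M : Matrix n n R} (hM : IsNilpotent M) :
    M ^ Fintype.card n = 0 := by
  have hchar : M.charpoly = Polynomial.X ^ Fintype.card n :=
    sub_eq_zero.mp (isNilpotent_charpoly_sub_pow_of_isNilpotent hM).eq_zero
  simpa [hchar] using aeval_self_charpoly M

theorem sub_one_pow_card_eq_zero_of_pow_eq_one [Nonempty n] (p : ℕ) [Fact p.Prime] [CharP R p]
    {u : Matrix n n R} (hu : u ^ p = 1) : (u - 1) ^ Fintype.card n = 0 :=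
  pow_card_eq_zero_of_isNilpotent
    ⟨p, by rw [sub_pow_char_of_commute _ (Commute.one_right u), hu, one_pow, sub_self]⟩

theorem eq_single_of_sq_eq_zero {i j : Fin 2} (hij : i ≠ j) {M : Matrix (Fin 2) (Fin 2) R}
    (hM : M ^ 2 = 0) (hcol : M *ᵥ Pi.single i 1 = 0) : M = single i j (M i j) := by
  have hcol' : ∀ k, M k i = 0 := fun k => by simpa using congrFun hcol k
  have hjj : M j j = 0 := by
    have := congrFun (congrFun hM j) j
    fin_cases i <;> fin_cases j <;> simp_all [sq, mul_apply, Fin.sum_univ_two]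
  ext k l
  fin_cases i <;> fin_cases j <;> fin_cases k <;> fin_cases l <;> simp_all

end Unipotent

theorem exists_mulVec_eq_self_of_pow_eq_one {n K : Type*} [Fintype n] [DecidableEq n]
    [Nonempty n] [Field K] (p : ℕ) [Fact p.Prime] [CharP K p] {u : Matrix n n K}
    (hu : u ^ p = 1) : ∃ v ≠ 0, u *ᵥ v = v := by
  have hdet : (u - 1).det = 0 := by
    apply (pow_eq_zero_iff (n := Fintype.card n) Fintype.card_ne_zero).mp
    rw [← det_pow, sub_one_pow_card_eq_zero_of_pow_eq_one p hu, det_zero]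
  obtain ⟨v, hv, huv⟩ := exists_mulVec_eq_zero_iff.mpr hdet
  exact ⟨v, hv, by rwa [sub_mulVec, one_mulVec, sub_eq_zero] at huv⟩

namespace GeneralLinearGroup

theorem conj_mulVec_eq_self {n R : Type*} [Fintype n] [DecidableEq n] [CommRing R] (g : GL n R)
    {u : GL n R} {v : n → R} (h : (u : Matrix n n R) *ᵥ v = v) :
    ((g * u * g⁻¹ : GL n R) : Matrix n n R) *ᵥ ((g : Matrix n n R) *ᵥ v) =
      (g : Matrix n n R) *ᵥ v := by
  rw [mulVec_mulVec, Units.val_mul, mul_assoc, ← Units.val_mul, inv_mul_cancel, Units.val_one,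
    mul_one, Units.val_mul, ← mulVec_mulVec, h]

section Transvection

variable {R : Type*} [CommRing R] [IsDomain R] (p : ℕ) [Fact p.Prime] [CharP R p]
  {i j : Fin 2} (hij : i ≠ j) {u : GL (Fin 2) R}

theorem exists_eq_toGL_transvection (hu : u ^ p = 1) (hu1 : u ≠ 1)
    (hfix : (u : Matrix (Fin 2) (Fin 2) R) *ᵥ Pi.single i 1 = Pi.single i 1) :
    ∃ c ≠ 0, u = SpecialLinearGroup.toGL (SpecialLinearGroup.transvection hij c) := by
  have hsq : ((u : Matrix (Fin 2) (Fin 2) R) - 1) ^ 2 = 0 :=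
    sub_one_pow_card_eq_zero_of_pow_eq_one p
      (by rw [← Units.val_pow_eq_pow_val, hu, Units.val_one])
  have hM := eq_single_of_sq_eq_zero hij hsq (by rw [sub_mulVec, hfix, one_mulVec, sub_self])
  have hu' : u = SpecialLinearGroup.toGL
      (SpecialLinearGroup.transvection hij ((u : Matrix (Fin 2) (Fin 2) R) i j)) := by
    refine Units.ext ?_
    rw [SpecialLinearGroup.coe_GL_coe_matrix, SpecialLinearGroup.transvection_coe,
      ← sub_eq_iff_eq_add', hM]
    simp [hij]
  refine ⟨_, fun hc => hu1 ?_, hu'⟩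
  rw [hu', hc, SpecialLinearGroup.transvection_coeff_zero, map_one]

theorem exists_eq_conj_toGL_transvection (hu : u ^ p = 1) (hu1 : u ≠ 1) (Q : GL (Fin 2) R)
    (hfix : (u : Matrix (Fin 2) (Fin 2) R) *ᵥ ((Q : Matrix (Fin 2) (Fin 2) R) *ᵥ Pi.single i 1)
      = (Q : Matrix (Fin 2) (Fin 2) R) *ᵥ Pi.single i 1) :
    ∃ c ≠ 0,
      u = Q * SpecialLinearGroup.toGL (SpecialLinearGroup.transvection hij c) * Q⁻¹ := by
  have hconj : Q⁻¹ * u * Q = MulAut.conj Q⁻¹ u := by simp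
  obtain ⟨c, hc, h⟩ := exists_eq_toGL_transvection p hij (u := Q⁻¹ * u * Q)
    (by rw [hconj, ← map_pow, hu, map_one])
    (by rwa [hconj, Ne, map_eq_one_iff _ (MulAut.conj Q⁻¹).injective])
    (by rw [Units.val_mul, Units.val_mul, ← mulVec_mulVec, ← mulVec_mulVec, hfix,
      mulVec_mulVec, Units.inv_mul, one_mulVec])
  refine ⟨c, hc, ?_⟩
  rw [← h]
  group

end Transvection

variable {ι K : Type*} [Fintype ι] [DecidableEq ι] [Field K]

theorem exists_mulVec_single_eq {b : ι → ι → K} (hb : LinearIndependent K b) :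
    ∃ Q : GL ι K, ∀ i, (Q : Matrix ι ι K) *ᵥ Pi.single i 1 = b i := by
  obtain ⟨Q, hQ⟩ := (linearIndependent_cols_iff_isUnit (A := (of b)ᵀ)).mp hb
  exact ⟨Q, fun i => by rw [hQ, mulVec_single_one]; rfl⟩

theorem exists_mulVec_notMem_span_singleton [Nontrivial ι] {G : Subgroup (GL ι K)}
    (hirr : ∀ W : Submodule K (ι → K),
      (∀ g ∈ G, ∀ v ∈ W, (g : Matrix ι ι K) *ᵥ v ∈ W) → W = ⊥ ∨ W = ⊤)
    {v : ι → K} (hv : v ≠ 0) : ∃ g ∈ G, (g : Matrix ι ι K) *ᵥ v ∉ K ∙ v := by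
  by_contra! hG
  have hinv : ∀ g ∈ G, ∀ w ∈ K ∙ v, (g : Matrix ι ι K) *ᵥ w ∈ K ∙ v := by
    rintro g hg w hw
    obtain ⟨a, rfl⟩ := Submodule.mem_span_singleton.mp hw
    rw [mulVec_smul]
    exact Submodule.smul_mem _ a (hG g hg)
  rcases hirr _ hinv with hbot | htop
  · exact hv (Submodule.span_singleton_eq_bot.mp hbot)
  · have hrank := finrank_span_singleton (K := K) hv
    rw [htop, finrank_top, Module.finrank_fintype_fun_eq_card] at hrank
    exact Fintype.one_lt_card.ne' hrank

end GeneralLinearGroup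

namespace SpecialLinearGroup

variable {ι : Type*} [Fintype ι] [DecidableEq ι]

theorem transvection_pow {R : Type*} [CommRing R] {i j : ι} (hij : i ≠ j) (b : R) (n : ℕ) :
    transvection hij b ^ n = transvection hij (n * b) := by
  induction n with
  | zero => simp
  | succ n ih => rw [pow_succ, ih, ← transvection_add, Nat.cast_succ, add_one_mul]

theorem transvection_mem_of_mem {p : ℕ} [Fact p.Prime]
    {H : Subgroup (SpecialLinearGroup ι (ZMod p))} {i j : ι} (hij : i ≠ j) {c : ZMod p}
    (hc : c ≠ 0) (h : transvection hij c ∈ H) (a : ZMod p) : transvection hij a ∈ H := by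
  have := H.pow_mem h (a / c).val
  rwa [transvection_pow, ZMod.natCast_zmod_val, div_mul_cancel₀ _ hc] at this

theorem toGL_mem_of_conj_toGL_mem {R : Type*} [CommRing R] {G : Subgroup (GL ι R)} (Q : GL ι R)
    (h : ∀ s : SpecialLinearGroup ι R, Q * toGL s * Q⁻¹ ∈ G) (s : SpecialLinearGroup ι R) :
    toGL s ∈ G := by
  let t : SpecialLinearGroup ι R := ⟨(Q⁻¹ : GL ι R) * s * Q, by
    rw [det_mul, det_mul, mul_right_comm, ← det_mul, Units.inv_mul, det_one, one_mul, s.2]⟩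
  have ht : toGL t = Q⁻¹ * toGL s * Q := Units.ext rfl
  simpa [ht, mul_assoc] using h t

end SpecialLinearGroup

theorem SL2.eq_top_of_transvection_mem {p : ℕ} [Fact p.Prime] {H : Subgroup SL(2, ZMod p)}
    {c d : ZMod p} (hc : c ≠ 0) (hd : d ≠ 0)
    (h01 : SpecialLinearGroup.transvection zero_ne_one c ∈ H)
    (h10 : SpecialLinearGroup.transvection one_ne_zero d ∈ H) : H = ⊤ := by
  refine eq_top_iff.mpr fun s _ => SL2.transvection_induction (· ∈ H) ?_ (fun _ _ => H.mul_mem) s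
  intro i j hij a
  fin_cases i <;> fin_cases j
  · exact absurd rfl hij
  · exact SpecialLinearGroup.transvection_mem_of_mem _ hc h01 a
  · exact SpecialLinearGroup.transvection_mem_of_mem _ hd h10 a
  · exact absurd rfl hij

end Matrix

/-- A subgroup `G` of `GL₂(𝔽_p)` acting irreducibly on the standard representation `𝔽_p²`
whose order is divisible by `p` contains `SL₂(𝔽_p)`. -/
theorem subgroup_irreducible_contains_SL2 (p : ℕ) [Fact p.Prime]
    (G : Subgroup (GL (Fin 2) (ZMod p)))
    (hirr : ∀ W : Submodule (ZMod p) (Fin 2 → ZMod p),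
      (∀ g ∈ G, ∀ v ∈ W, (g : Matrix (Fin 2) (Fin 2) (ZMod p)).mulVec v ∈ W) →
      W = ⊥ ∨ W = ⊤)
    (hdvd : p ∣ Nat.card G) :
    ∀ s : Matrix.SpecialLinearGroup (Fin 2) (ZMod p),
      Matrix.SpecialLinearGroup.toGL s ∈ G := by
  obtain ⟨u, huG, hup, hu1⟩ := G.exists_mem_pow_eq_one_ne_one p hdvd
  obtain ⟨v, hv, huv⟩ := exists_mulVec_eq_self_of_pow_eq_one p
    (u := (u : Matrix (Fin 2) (Fin 2) (ZMod p)))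
    (by rw [← Units.val_pow_eq_pow_val, hup, Units.val_one])
  obtain ⟨g, hgG, hgv⟩ := GeneralLinearGroup.exists_mulVec_notMem_span_singleton hirr hv
  obtain ⟨Q, hQ⟩ := GeneralLinearGroup.exists_mulVec_single_eq
    (b := ![v, (g : Matrix (Fin 2) (Fin 2) (ZMod p)) *ᵥ v])
    ((LinearIndependent.pair_iff' hv).mpr fun a ha =>
      hgv (ha ▸ Submodule.smul_mem _ a (Submodule.mem_span_singleton_self v)))
  obtain ⟨c, hc, huc⟩ :=
    GeneralLinearGroup.exists_eq_conj_toGL_transvection p zero_ne_one hup hu1 Q (by rwa [hQ])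
  obtain ⟨d, hd, hud⟩ := GeneralLinearGroup.exists_eq_conj_toGL_transvection p one_ne_zero
    (u := g * u * g⁻¹) (by rw [conj_pow, hup, mul_one, mul_inv_cancel])
    (by rwa [Ne, conj_eq_one_iff]) Q
    (by rw [hQ]; exact GeneralLinearGroup.conj_mulVec_eq_self g huv)
  have hSL := SL2.eq_top_of_transvection_mem
    (H := (G.comap (MulAut.conj Q).toMonoidHom).comap SpecialLinearGroup.toGL) hc hd
    (by simpa [huc] using huG)
    (by simpa [hud] using G.mul_mem (G.mul_mem hgG huG) (G.inv_mem hgG))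
  exact SpecialLinearGroup.toGL_mem_of_conj_toGL_mem Q fun s => by
    simpa using (Subgroup.eq_top_iff' _).mp hSL s
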